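/- Let S be a commutative ring, F a formal group law over S, n ≥ 2, and 1 ≤ i ≤ n−1. Then the element x_i −_F x_{i+1} is a non-zero-divisor (regular element) of the multivariate power series ring R = S[[x_1,…,x_n]]. -/

import Mathlib

/- Common setup: substitution of multivariate power series, formal group laws,
formal inverses, and the variable–swapping operation. -/

open MvPowerSeries Finsupp

noncomputable section

variable {S : Type*} [CommRing S]

/-- Substitution of a family of multivariate power series (each intended to have zero
constant coefficient) into a power series in `k` variables.  When every `a j` has zero
constant coefficient, the coefficient of a monomial `m` of the substituted series only
receives contributions from exponents `d` with `d j ≤ deg m`, so the finite sum below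
computes the genuine substitution. -/
noncomputable def msubst {k n : ℕ} (a : Fin k → MvPowerSeries (Fin n) S)
    (F : MvPowerSeries (Fin k) S) : MvPowerSeries (Fin n) S :=
  fun m =>
    ∑ d ∈ Finset.Iic (equivFunOnFinite.symm fun _ : Fin k => m.sum fun _ e => e),
      MvPowerSeries.coeff d F * MvPowerSeries.coeff m (∏ j, a j ^ d j)

/-- `F ∈ S[[x,y]]` is a (one-dimensional, commutative) formal group law over `S`:
zero constant coefficient, commutativity `F(x,y) = F(y,x)`, unitality `F(x,0) = x`,
and associativity `F(F(x,y),z) = F(x,F(y,z))`. -/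
def IsFormalGroupLaw (F : MvPowerSeries (Fin 2) S) : Prop :=
  MvPowerSeries.constantCoeff F = 0 ∧
  msubst ![(X 1 : MvPowerSeries (Fin 2) S), X 0] F = F ∧
  msubst ![(X 0 : MvPowerSeries (Fin 2) S), 0] F = X 0 ∧
  msubst ![msubst ![(X 0 : MvPowerSeries (Fin 3) S), X 1] F, X 2] F
    = msubst ![(X 0 : MvPowerSeries (Fin 3) S), msubst ![(X 1 : MvPowerSeries (Fin 3) S), X 2] F] F

/-- `ι ∈ S[[x]]` is the formal inverse of `F`: it has zero constant coefficient
and `F(x, ι(x)) = 0`. -/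
def IsFormalInverse (F : MvPowerSeries (Fin 2) S) (ι : MvPowerSeries (Fin 1) S) : Prop :=
  MvPowerSeries.constantCoeff ι = 0 ∧
  msubst ![(X 0 : MvPowerSeries (Fin 1) S), ι] F = 0

/-- `ι(b)`, the substitution of `b` into the formal inverse `ι`. -/
noncomputable def fneg (ι : MvPowerSeries (Fin 1) S) {n : ℕ}
    (b : MvPowerSeries (Fin n) S) : MvPowerSeries (Fin n) S :=
  msubst ![b] ι

/-- `a −_F b := F(a, ι(b))`. -/
noncomputable def fsub (F : MvPowerSeries (Fin 2) S) (ι : MvPowerSeries (Fin 1) S) {n : ℕ}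
    (a b : MvPowerSeries (Fin n) S) : MvPowerSeries (Fin n) S :=
  msubst ![a, fneg ι b] F

/-- Substitution `g(a,b)` of two power series into a two-variable power series `g`. -/
noncomputable def gsub (g : MvPowerSeries (Fin 2) S) {n : ℕ}
    (a b : MvPowerSeries (Fin n) S) : MvPowerSeries (Fin n) S :=
  msubst ![a, b] g

/-- The map on multivariate power series interchanging the variables `x_i` and `x_j`
(the renaming along the transposition `(i,j)`). -/
def swapVars {n : ℕ} (i j : Fin n) (f : MvPowerSeries (Fin n) S) :
    MvPowerSeries (Fin n) S :=
  fun m => f (equivMapDomain (Equiv.swap i j) m)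

/- Let `G(x, y) = x −_F y ∈ S[[x, y]]`, so that `x_i −_F x_j = G(x_i, x_j)`. On series with zero
constant coefficient `msubst` is Mathlib's `MvPowerSeries.subst`, so substitutions compose and
`G(x, x) = F(x, ι(x)) = 0`, `G(x, 0) = F(x, 0) = x`. After the shear `x ↦ x + y` the first
identity says that `G(x + y, y)` vanishes at `x = 0`, hence is divisible by `x`; shearing back,
`G = (x - y) U`. The second identity then forces `U(0, 0) = 1`, so `U(x_i, x_j)` is a unit and
`x_i −_F x_j = (x_i - x_j) U(x_i, x_j)` is a non-zero-divisor along with `x_i - x_j`. -/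

namespace MvPowerSeries

theorem hasSubst_pair {τ : Type*} {a b : MvPowerSeries τ S} (ha : constantCoeff a = 0)
    (hb : constantCoeff b = 0) : HasSubst ![a, b] :=
  hasSubst_of_constantCoeff_zero (Fin.forall_fin_two.2 ⟨ha, hb⟩)

theorem coeff_prod_pow_eq_zero_of_degree_lt {σ τ : Type*} [Fintype σ]
    {a : σ → MvPowerSeries τ S} (ha : ∀ s, constantCoeff (a s) = 0)
    {d : σ →₀ ℕ} {m : τ →₀ ℕ} (h : m.degree < d.degree) :
    coeff m (∏ s, a s ^ d s) = 0 := by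
  apply coeff_of_lt_order
  calc (m.degree : ℕ∞) < d.degree := by exact_mod_cast h
    _ = ∑ s, (d s : ℕ∞) := by simp [Finsupp.degree_eq_sum]
    _ ≤ ∑ s, (a s ^ d s).order :=
        Finset.sum_le_sum fun s _ => le_order_pow_of_constantCoeff_eq_zero _ (ha s)
    _ ≤ _ := le_order_prod _ _

theorem constantCoeff_subst_of_forall_constantCoeff_eq_zero {σ τ : Type*} [Finite σ]
    {a : σ → MvPowerSeries τ S} (ha : ∀ s, constantCoeff (a s) = 0) (f : MvPowerSeries σ S) :
    constantCoeff (subst a f) = constantCoeff f := by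
  have hsub := hasSubst_of_constantCoeff_zero ha
  have h := constantCoeff_subst_eq_zero hsub ha (f := f - C (constantCoeff f)) (by simp)
  rwa [subst_sub hsub, subst_C, map_sub, constantCoeff_C, sub_eq_zero] at h

theorem coeff_subst_zero_X_of_eq_zero (ψ : MvPowerSeries (Fin 2) S) {m : Fin 2 →₀ ℕ}
    (hm : m 0 = 0) : coeff m (subst ![0, X 1] ψ) = coeff m ψ := by
  have hprod (d : Fin 2 →₀ ℕ) : (d.prod fun s e => ![0, X 1] s ^ e) =
      (0 : MvPowerSeries (Fin 2) S) ^ d 0 * monomial (single 1 (d 1)) 1 := by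
    rw [Finsupp.prod_fintype _ _ fun _ => pow_zero _, Fin.prod_univ_two, Matrix.cons_val_zero,
      Matrix.cons_val_one, Matrix.cons_val_zero, X_pow_eq]
  have hm' : m = single 1 (m 1) := by ext s; fin_cases s <;> simp [hm]
  rw [coeff_subst (hasSubst_pair (map_zero _) (constantCoeff_X 1)), finsum_eq_single _ m]
  · rw [hprod, hm, pow_zero, one_mul, ← hm', coeff_monomial_same, smul_eq_mul, mul_one]
  · intro d hd
    rw [hprod]
    rcases Nat.eq_zero_or_pos (d 0) with hd0 | hd0
    · have hd' : d = single 1 (d 1) := by ext s; fin_cases s <;> simp [hd0]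
      rw [hd0, pow_zero, one_mul, ← hd', coeff_monomial_ne (Ne.symm hd), smul_zero]
    · rw [zero_pow hd0.ne', zero_mul, map_zero, smul_zero]

theorem X_sub_X_dvd_of_subst_X_X_eq_zero {φ : MvPowerSeries (Fin 2) S}
    (hφ : subst ![(X 0 : MvPowerSeries (Fin 1) S), X 0] φ = 0) :
    (X 0 - X 1 : MvPowerSeries (Fin 2) S) ∣ φ := by
  have hX0 : constantCoeff (X 0 : MvPowerSeries (Fin 2) S) = 0 := constantCoeff_X 0
  have hX1 : constantCoeff (X 1 : MvPowerSeries (Fin 2) S) = 0 := constantCoeff_X 1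
  have hshear := hasSubst_pair (by simp [hX0, hX1] :
    constantCoeff (X 0 + X 1 : MvPowerSeries (Fin 2) S) = 0) hX1
  have hunshear := hasSubst_pair (by simp [hX0, hX1] :
    constantCoeff (X 0 - X 1 : MvPowerSeries (Fin 2) S) = 0) hX1
  have hkill := hasSubst_pair (map_zero _) hX1
  have hdiag : HasSubst ![(X 1 : MvPowerSeries (Fin 2) S)] :=
    hasSubst_of_constantCoeff_zero (Fin.forall_fin_one.2 hX1)
  set ψ : MvPowerSeries (Fin 2) S := subst ![X 0 + X 1, X 1] φ with hψ
  have hψ0 : subst ![0, (X 1 : MvPowerSeries (Fin 2) S)] ψ = 0 := calc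
    _ = subst ![(X 1 : MvPowerSeries (Fin 2) S), X 1] φ := by
      rw [hψ, subst_comp_subst_apply hshear hkill]
      congr 1
      funext s
      fin_cases s <;> simp [subst_add hkill, subst_X hkill]
    _ = subst ![(X 1 : MvPowerSeries (Fin 2) S)]
          (subst ![(X 0 : MvPowerSeries (Fin 1) S), X 0] φ) := by
      rw [subst_comp_subst_apply (hasSubst_pair (constantCoeff_X 0) (constantCoeff_X 0)) hdiag]
      congr 1
      funext s
      fin_cases s <;> simp [subst_X hdiag]
    _ = 0 := by rw [hφ, ← substAlgHom_apply hdiag, map_zero]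
  have hφψ : φ = subst ![X 0 - X 1, X 1] ψ := by
    rw [hψ, subst_comp_subst_apply hshear hunshear]
    conv_lhs => rw [← id_eq φ, ← subst_self]
    congr 1
    funext s
    fin_cases s <;> simp [subst_add hunshear, subst_X hunshear]
  obtain ⟨V, hV⟩ : (X 0 : MvPowerSeries (Fin 2) S) ∣ ψ := X_dvd_iff.2 fun m hm => by
    rw [← coeff_subst_zero_X_of_eq_zero ψ hm, hψ0, map_zero]
  refine ⟨subst ![X 0 - X 1, X 1] V, ?_⟩
  rw [hφψ, hV, subst_mul hunshear, subst_X hunshear]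
  rfl

theorem X_sub_X_mem_nonZeroDivisors {σ : Type*} {i j : σ} (hij : i ≠ j) :
    (X i - X j : MvPowerSeries σ S) ∈ nonZeroDivisors (MvPowerSeries σ S) := by
  rw [mem_nonZeroDivisors_iff_right]
  intro u hu
  -- `u (x_i - x_j) = 0` moves each coefficient of `u` to one with smaller `x_j`-exponent.
  have hshift (m : σ →₀ ℕ) : coeff m u =
      if single j 1 ≤ m + single i 1 then coeff (m + single i 1 - single j 1) u else 0 := by
    have h := congrArg (coeff (m + single i 1)) hu
    rw [mul_sub, map_sub, X_def, X_def, coeff_mul_monomial, coeff_mul_monomial, if_pos le_add_self,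
      add_tsub_cancel_right, mul_one, map_zero, sub_eq_zero] at h
    rw [h]
    split_ifs <;> simp
  suffices h : ∀ k, ∀ m : σ →₀ ℕ, m j = k → coeff m u = 0 from
    ext fun m => h (m j) m rfl
  intro k
  induction k with
  | zero =>
    intro m hm
    rw [hshift, if_neg]
    simp [Finsupp.single_le_iff, hm, hij]
  | succ k ih =>
    intro m hm
    rw [hshift, if_pos (by simp [Finsupp.single_le_iff, hm, hij]), ih]
    simp [hm, hij]

end MvPowerSeries

theorem msubst_eq_subst {k n : ℕ} {a : Fin k → MvPowerSeries (Fin n) S}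
    (ha : ∀ j, constantCoeff (a j) = 0) (F : MvPowerSeries (Fin k) S) :
    msubst a F = subst a F := by
  ext m
  have hprod (d : Fin k →₀ ℕ) : (d.prod fun j e => a j ^ e) = ∏ j, a j ^ d j :=
    Finsupp.prod_fintype _ _ fun _ => pow_zero _
  rw [coeff_subst (hasSubst_of_constantCoeff_zero ha), finsum_eq_sum_of_support_subset
    (s := Finset.Iic (equivFunOnFinite.symm fun _ => m.degree))]
  · exact Finset.sum_congr rfl fun d _ => by rw [smul_eq_mul, hprod]
  · intro d hd
    by_contra hle
    obtain ⟨j, hj⟩ : ∃ j, m.degree < d j := by simpa [Finsupp.le_def] using hle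
    refine hd ?_
    dsimp only
    rw [hprod, coeff_prod_pow_eq_zero_of_degree_lt ha (hj.trans_le (d.le_degree j)), smul_zero]

section FormalSubtraction

variable {ι : MvPowerSeries (Fin 1) S} {n : ℕ}

theorem fneg_eq_subst {b : MvPowerSeries (Fin n) S} (hb : constantCoeff b = 0) :
    fneg ι b = subst ![b] ι :=
  msubst_eq_subst (Fin.forall_fin_one.2 hb) ι

theorem constantCoeff_fneg (hι : constantCoeff ι = 0) {b : MvPowerSeries (Fin n) S}
    (hb : constantCoeff b = 0) : constantCoeff (fneg ι b) = 0 := by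
  rw [fneg_eq_subst hb]
  exact constantCoeff_subst_eq_zero (hasSubst_of_constantCoeff_zero (Fin.forall_fin_one.2 hb))
    (Fin.forall_fin_one.2 hb) hι

theorem fneg_X_zero : fneg ι (X 0 : MvPowerSeries (Fin 1) S) = ι := by
  have hX : ![(X 0 : MvPowerSeries (Fin 1) S)] = X := funext (Fin.forall_fin_one.2 rfl)
  rw [fneg_eq_subst (constantCoeff_X 0), hX, subst_self, id]

theorem fneg_zero (hι : constantCoeff ι = 0) : fneg ι (0 : MvPowerSeries (Fin n) S) = 0 := by
  have h0 : ![(0 : MvPowerSeries (Fin n) S)] = 0 := funext (Fin.forall_fin_one.2 rfl)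
  rw [fneg_eq_subst (map_zero _), h0, subst_zero_of_constantCoeff_zero hι]

theorem subst_fneg_X {m : ℕ} {c : Fin m → MvPowerSeries (Fin n) S}
    (hc : ∀ k, constantCoeff (c k) = 0) (k : Fin m) :
    subst c (fneg ι (X k)) = fneg ι (c k) := by
  rw [fneg_eq_subst (constantCoeff_X k), fneg_eq_subst (hc k),
    subst_comp_subst_apply (hasSubst_of_constantCoeff_zero (by simp))
      (hasSubst_of_constantCoeff_zero hc)]
  congr 1
  funext s
  fin_cases s
  simp [subst_X (hasSubst_of_constantCoeff_zero hc)]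

variable {F : MvPowerSeries (Fin 2) S}

theorem fsub_eq_subst (hι : constantCoeff ι = 0) {a b : MvPowerSeries (Fin n) S}
    (ha : constantCoeff a = 0) (hb : constantCoeff b = 0) :
    fsub F ι a b = subst ![a, fneg ι b] F :=
  msubst_eq_subst (Fin.forall_fin_two.2 ⟨ha, constantCoeff_fneg hι hb⟩) F

theorem subst_fsub_X_X (hι : constantCoeff ι = 0) {m : ℕ} {c : Fin m → MvPowerSeries (Fin n) S}
    (hc : ∀ k, constantCoeff (c k) = 0) (k l : Fin m) :
    subst c (fsub F ι (X k) (X l)) = fsub F ι (c k) (c l) := by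
  rw [fsub_eq_subst hι (constantCoeff_X k) (constantCoeff_X l), fsub_eq_subst hι (hc k) (hc l),
    subst_comp_subst_apply (hasSubst_pair (constantCoeff_X k) (constantCoeff_fneg hι
      (constantCoeff_X l))) (hasSubst_of_constantCoeff_zero hc)]
  congr 1
  funext s
  fin_cases s
  · simp [subst_X (hasSubst_of_constantCoeff_zero hc)]
  · simp [subst_fneg_X hc]

theorem exists_fsub_X_X_eq_X_sub_X_mul (hF : IsFormalGroupLaw F) (hι : IsFormalInverse F ι) :
    ∃ U : MvPowerSeries (Fin 2) S,
      fsub F ι (X 0) (X 1) = (X 0 - X 1) * U ∧ constantCoeff U = 1 := by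
  have hdiag : subst ![(X 0 : MvPowerSeries (Fin 1) S), X 0] (fsub F ι (X 0) (X 1)) = 0 := by
    refine (subst_fsub_X_X (c := ![(X 0 : MvPowerSeries (Fin 1) S), X 0]) hι.1
      (Fin.forall_fin_two.2 ⟨constantCoeff_X 0, constantCoeff_X 0⟩) 0 1).trans ?_
    change msubst ![X 0, fneg ι (X 0)] F = 0
    rw [fneg_X_zero]
    exact hι.2
  obtain ⟨U, hU⟩ := X_sub_X_dvd_of_subst_X_X_eq_zero hdiag
  refine ⟨U, hU, ?_⟩
  have hc : ∀ k, constantCoeff (![(X 0 : MvPowerSeries (Fin 2) S), 0] k) = 0 :=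
    Fin.forall_fin_two.2 ⟨constantCoeff_X 0, map_zero _⟩
  have hx : subst ![(X 0 : MvPowerSeries (Fin 2) S), 0] (fsub F ι (X 0) (X 1)) = X 0 := by
    refine (subst_fsub_X_X hι.1 hc 0 1).trans ?_
    change msubst ![X 0, fneg ι 0] F = X 0
    rw [fneg_zero hι.1]
    exact hF.2.2.1
  have hsub := hasSubst_of_constantCoeff_zero hc
  rw [hU, subst_mul hsub, subst_sub hsub, subst_X hsub, subst_X hsub] at hx
  rw [← constantCoeff_subst_of_forall_constantCoeff_eq_zero hc U]
  generalize subst ![(X 0 : MvPowerSeries (Fin 2) S), 0] U = W at hx ⊢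
  simpa only [Matrix.cons_val_zero, Matrix.cons_val_one, sub_zero, X_def, coeff_monomial_mul,
    le_refl, if_true, one_mul, tsub_self, coeff_zero_eq_constantCoeff_apply,
    coeff_monomial_same] using congrArg (coeff (single 0 1)) hx

end FormalSubtraction

/-- `x_i −_F x_{i+1}` is a non-zero-divisor of `R = S[[x_1,…,x_n]]`. -/
theorem fsub_X_mem_nonZeroDivisors
    (F : MvPowerSeries (Fin 2) S) (hF : IsFormalGroupLaw F)
    (ι : MvPowerSeries (Fin 1) S) (hι : IsFormalInverse F ι)
    {n : ℕ} (i j : Fin n) (hij : (i : ℕ) + 1 = (j : ℕ)) :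
    fsub F ι (X i : MvPowerSeries (Fin n) S) (X j)
      ∈ nonZeroDivisors (MvPowerSeries (Fin n) S) := by
  have hne : i ≠ j := fun h => by rw [h] at hij; omega
  have hc : ∀ k, constantCoeff (![(X i : MvPowerSeries (Fin n) S), X j] k) = 0 :=
    Fin.forall_fin_two.2 ⟨constantCoeff_X i, constantCoeff_X j⟩
  have hsub := hasSubst_of_constantCoeff_zero hc
  obtain ⟨U, hU, hU1⟩ := exists_fsub_X_X_eq_X_sub_X_mul hF hι
  have hfac : fsub F ι (X i) (X j) = (X i - X j) * subst ![X i, X j] U := by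
    refine (subst_fsub_X_X hι.1 hc 0 1).symm.trans ?_
    rw [hU, subst_mul hsub, subst_sub hsub, subst_X hsub, subst_X hsub]
    rfl
  rw [hfac]
  refine mul_mem (X_sub_X_mem_nonZeroDivisors hne) (mem_nonZeroDivisors_of_constantCoeff ?_)
  rw [constantCoeff_subst_of_forall_constantCoeff_eq_zero hc, hU1]
  exact one_mem _

end
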